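/- arXiv:1406.4575 — 2 statements merged into one kernel-verified Lean document; each statement's English description precedes it below -/
import Mathlib

section
/- With the improved parity-to-Büchi construction A' (merging ≡_{2k}-equivalent states and delaying the guess of the minimal even parity 2k to a state of parity 2k), every word accepted by A' is accepted by the original NPW P. Consequently L(P) = L(A'). -/
/-- A nondeterministic Büchi automaton. -/
structure NBW (A Q : Type*) where
  init : Q
  trans : Q → A → Set Q
  acc : Set Q

def NBW.IsRun {A Q : Type*} (M : NBW A Q) (w : ℕ → A) (ρ : ℕ → Q) : Prop :=
  ρ 0 = M.init ∧ ∀ i, ρ (i + 1) ∈ M.trans (ρ i) (w i)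

def NBW.Accepting {A Q : Type*} (M : NBW A Q) (ρ : ℕ → Q) : Prop :=
  ∃ q ∈ M.acc, ∀ N, ∃ i ≥ N, ρ i = q

def NBW.Lang {A Q : Type*} (M : NBW A Q) : Set (ℕ → A) :=
  {w | ∃ ρ, M.IsRun w ρ ∧ M.Accepting ρ}

/-- A nondeterministic parity automaton: `par` assigns each state its parity. -/
structure NPW (A Q : Type*) where
  init : Q
  trans : Q → A → Set Q
  par : Q → ℕ

/-- The set of states occurring infinitely often in a run. -/
def InfOcc {Q : Type*} (ρ : ℕ → Q) : Set Q := {q | ∀ N, ∃ i ≥ N, ρ i = q}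

/-- The parity acceptance condition: the minimum parity among states occurring
infinitely often is even. -/
def ParityAccepting {Q : Type*} (F : Q → ℕ) (ρ : ℕ → Q) : Prop :=
  ∃ q ∈ InfOcc ρ, Even (F q) ∧ ∀ p ∈ InfOcc ρ, F q ≤ F p

def NPW.IsRun {A Q : Type*} (P : NPW A Q) (w : ℕ → A) (ρ : ℕ → Q) : Prop :=
  ρ 0 = P.init ∧ ∀ i, ρ (i + 1) ∈ P.trans (ρ i) (w i)

def NPW.Lang {A Q : Type*} (P : NPW A Q) : Set (ℕ → A) :=
  {w | ∃ ρ, P.IsRun w ρ ∧ ParityAccepting P.par ρ}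

/-- The merging relation `≡_e` (for an even parity `e`). -/
def EqvPar {A Q : Type*} (P : NPW A Q) (e : ℕ) (p q : Q) : Prop :=
  (∀ a, P.trans p a = P.trans q a) ∧
    ((P.par p = e ∧ P.par q = e) ∨ (e < P.par p ∧ e < P.par q) ∨
     (P.par p < e ∧ P.par q < e))

/-- The `≡_e`-equivalence class `[q]_e`. -/
def ClsPar {A Q : Type*} (P : NPW A Q) (e : ℕ) (q : Q) : Set Q :=
  {p | EqvPar P e p q}

/-- The improved conversion from an NPW (parities bounded by `2*r`) to an NBW:
states are pairs `([q]_{2k}, 2k)` of an equivalence class together with the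
guessed minimal even parity (the second component `0` also serves as "no guess"). -/
def improvedConv {A Q : Type*} (P : NPW A Q) (r : ℕ) : NBW A (Set Q × ℕ) where
  init := (ClsPar P 0 P.init, 0)
  trans := fun s a =>
    {t | -- [TR1]
      (∃ p q k, 0 < k ∧ k ≤ r ∧ s = (ClsPar P 0 p, 0) ∧
        t = (ClsPar P (2 * k) q, 2 * k) ∧
        (P.trans p a ∩ ClsPar P (2 * k) q).Nonempty ∧ P.par q = 2 * k) ∨
      -- [TR2]
      (∃ p q k, k ≤ r ∧ s = (ClsPar P (2 * k) p, 2 * k) ∧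
        t = (ClsPar P (2 * k) q, 2 * k) ∧
        (P.trans p a ∩ ClsPar P (2 * k) q).Nonempty ∧ 2 * k ≤ P.par q)}
  acc := {s | ∃ q k, k ≤ r ∧ s = (ClsPar P (2 * k) q, 2 * k) ∧ P.par q = 2 * k}

/-! A run of `A'` is a sequence of classes `[q]_{2k}` whose transitions only witness *some*
member of the source class; but members of a class share their transition function, so a
run of `P` can be threaded through the classes forward in time. Along it the guessed parity
never decreases and bounds the parity of the current state from below, while the accepting
class, visited infinitely often, contains only states of parity exactly `2k`; finiteness of
`Q` picks one of them that the run of `P` visits infinitely often. Conversely, a run of `P`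
of minimal recurring parity `2k` is copied by `A'`, which jumps to level `2k` at a visit of a
state of parity `2k` after all transient states have been left. -/

open Filter

section InfOcc

variable {Q : Type*} {ρ : ℕ → Q}

theorem mem_infOcc_iff_frequently {q : Q} : q ∈ InfOcc ρ ↔ ∃ᶠ i in atTop, ρ i = q :=
  frequently_atTop.symm

theorem Filter.Frequently.exists_mem_infOcc [Finite Q] {T : Set Q}
    (h : ∃ᶠ i in atTop, ρ i ∈ T) : ∃ q ∈ T, q ∈ InfOcc ρ := by
  obtain ⟨⟨q, hq⟩, hfreq⟩ :=
    frequently_exists.1 (h.mono fun i hi => ⟨(⟨ρ i, hi⟩ : T), rfl⟩ :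
      ∃ᶠ i in atTop, ∃ q : T, ρ i = q)
  exact ⟨q, hq, mem_infOcc_iff_frequently.2 hfreq⟩

theorem eventually_mem_infOcc [Finite Q] (ρ : ℕ → Q) : ∀ᶠ i in atTop, ρ i ∈ InfOcc ρ := by
  have hleave : ∀ᶠ i in atTop, ∀ q ∈ (InfOcc ρ)ᶜ, ρ i ≠ q :=
    (Set.toFinite _).eventually_all.2 fun q hq =>
      not_frequently.1 (mt mem_infOcc_iff_frequently.2 hq)
  filter_upwards [hleave] with i hi
  by_contra h
  exact hi (ρ i) h rfl

end InfOcc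

theorem exists_seq_forall_mem_of_forall_exists {Q : Type*} {S : ℕ → Set Q}
    {R : ℕ → Q → Q → Prop} {x : Q} (hx : x ∈ S 0)
    (h : ∀ i, ∀ p ∈ S i, ∃ q ∈ S (i + 1), R i p q) :
    ∃ ρ : ℕ → Q, ρ 0 = x ∧ ∀ i, ρ i ∈ S i ∧ R i (ρ i) (ρ (i + 1)) := by
  choose! f hfS hfR using h
  let ρ : ℕ → Q := fun n => Nat.rec x f n
  have hρS : ∀ i, ρ i ∈ S i := fun i => Nat.rec hx (fun i ih => hfS i _ ih) i
  exact ⟨ρ, rfl, fun i => ⟨hρS i, hfR i _ (hρS i)⟩⟩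

section ClsPar

variable {A Q : Type*} {P : NPW A Q} {e : ℕ} {p q : Q}

theorem mem_clsPar_self (P : NPW A Q) (e : ℕ) (q : Q) : q ∈ ClsPar P e q := by
  refine ⟨fun _ => rfl, ?_⟩
  rcases lt_trichotomy (P.par q) e with h | h | h
  · exact Or.inr (Or.inr ⟨h, h⟩)
  · exact Or.inl ⟨h, h⟩
  · exact Or.inr (Or.inl ⟨h, h⟩)

theorem trans_eq_of_mem_clsPar (h : p ∈ ClsPar P e q) : P.trans p = P.trans q :=
  funext h.1

theorem le_par_of_mem_clsPar (h : p ∈ ClsPar P e q) (hq : e ≤ P.par q) : e ≤ P.par p := by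
  rcases h.2 with ⟨_, _⟩ | ⟨_, _⟩ | ⟨_, _⟩ <;> omega

theorem par_eq_of_mem_clsPar (h : p ∈ ClsPar P e q) (hq : P.par q = e) : P.par p = e := by
  rcases h.2 with ⟨_, _⟩ | ⟨_, _⟩ | ⟨_, _⟩ <;> omega

end ClsPar

section ImprovedConv

variable {A Q : Type*} {P : NPW A Q} {r k : ℕ} {s t : Set Q × ℕ} {a : A} {p q : Q}

theorem exists_mem_trans_of_mem_improvedConv_trans (ht : t ∈ (improvedConv P r).trans s a)
    (hp : p ∈ s.1) : ∃ q ∈ t.1, q ∈ P.trans p a := by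
  rcases ht with ⟨p', q', k, -, -, rfl, rfl, ⟨q, hq, hq'⟩, -⟩ |
    ⟨p', q', k, -, rfl, rfl, ⟨q, hq, hq'⟩, -⟩ <;>
  exact ⟨q, hq', by rwa [trans_eq_of_mem_clsPar hp]⟩

theorem snd_le_snd_of_mem_improvedConv_trans (ht : t ∈ (improvedConv P r).trans s a) :
    s.2 ≤ t.2 := by
  rcases ht with ⟨_, _, _, _, _, rfl, rfl, _⟩ | ⟨_, _, _, _, rfl, rfl, _⟩ <;> simp

theorem snd_le_par_of_mem_improvedConv_trans (ht : t ∈ (improvedConv P r).trans s a)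
    (hq : q ∈ t.1) : t.2 ≤ P.par q := by
  rcases ht with ⟨_, q', _, _, _, rfl, rfl, _, hpar⟩ | ⟨_, q', _, _, rfl, rfl, _, hpar⟩
  · exact le_par_of_mem_clsPar hq hpar.ge
  · exact le_par_of_mem_clsPar hq hpar

theorem even_snd_of_mem_improvedConv_acc (hs : s ∈ (improvedConv P r).acc) : Even s.2 := by
  obtain ⟨_, k, -, rfl, -⟩ := hs
  exact even_two_mul k

theorem par_eq_snd_of_mem_improvedConv_acc (hs : s ∈ (improvedConv P r).acc) (hq : q ∈ s.1) :
    P.par q = s.2 := by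
  obtain ⟨_, _, -, rfl, hpar⟩ := hs
  exact par_eq_of_mem_clsPar hq hpar

theorem clsPar_mem_improvedConv_trans_clsPar (hk : k ≤ r) (hq : q ∈ P.trans p a)
    (hpar : 2 * k ≤ P.par q) :
    (ClsPar P (2 * k) q, 2 * k) ∈ (improvedConv P r).trans (ClsPar P (2 * k) p, 2 * k) a :=
  Or.inr ⟨p, q, k, hk, rfl, rfl, ⟨q, hq, mem_clsPar_self P _ q⟩, hpar⟩

theorem clsPar_mem_improvedConv_trans_clsPar_zero (hk : k ≤ r) (hq : q ∈ P.trans p a)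
    (hpar : P.par q = 2 * k) :
    (ClsPar P (2 * k) q, 2 * k) ∈ (improvedConv P r).trans (ClsPar P 0 p, 0) a := by
  -- [TR1] needs `0 < k`; for `k = 0` the target has level `0` and [TR2] applies.
  rcases k.eq_zero_or_pos with rfl | hk0
  · simpa only [mul_zero] using clsPar_mem_improvedConv_trans_clsPar hk hq hpar.ge
  · exact Or.inl ⟨p, q, k, hk0, hk, rfl, rfl, ⟨q, hq, mem_clsPar_self P _ q⟩, hpar⟩

theorem improvedConv_isRun_of_isRun {w : ℕ → A} {ρ : ℕ → Q} (hρ : P.IsRun w ρ) {i₁ : ℕ}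
    (hi₁ : 0 < i₁) (hk : k ≤ r) (hpar : P.par (ρ i₁) = 2 * k)
    (hge : ∀ i ≥ i₁, 2 * k ≤ P.par (ρ i)) :
    (improvedConv P r).IsRun w fun i =>
      if i < i₁ then (ClsPar P 0 (ρ i), 0) else (ClsPar P (2 * k) (ρ i), 2 * k) := by
  refine ⟨by dsimp only; rw [if_pos hi₁, hρ.1]; rfl, fun i => ?_⟩
  dsimp only
  rcases lt_trichotomy (i + 1) i₁ with h | rfl | h
  · rw [if_pos h, if_pos (by omega)]
    simpa only [mul_zero] using
      clsPar_mem_improvedConv_trans_clsPar (k := 0) (Nat.zero_le r) (hρ.2 i) (Nat.zero_le _)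
  · rw [if_neg (lt_irrefl _), if_pos (by omega)]
    exact clsPar_mem_improvedConv_trans_clsPar_zero hk (hρ.2 i) hpar
  · rw [if_neg (by omega), if_neg (by omega)]
    exact clsPar_mem_improvedConv_trans_clsPar hk (hρ.2 i) (hge _ h.le)

theorem improvedConv_lang_subset [Finite Q] (P : NPW A Q) (r : ℕ) :
    (improvedConv P r).Lang ⊆ P.Lang := by
  rintro w ⟨σ, ⟨hσ0, hσ⟩, s, hs, hsσ⟩
  obtain ⟨ρ, hρ0, hρ⟩ := exists_seq_forall_mem_of_forall_exists
    (S := fun i => (σ i).1) (R := fun i p q => q ∈ P.trans p (w i))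
    (by rw [hσ0]; exact mem_clsPar_self P 0 P.init)
    fun i _ hp => exists_mem_trans_of_mem_improvedConv_trans (hσ i) hp
  have hmono : Monotone fun i => (σ i).2 :=
    monotone_nat_of_le_succ fun i => snd_le_snd_of_mem_improvedConv_trans (hσ i)
  obtain ⟨q, hqs, hq⟩ : ∃ q ∈ s.1, q ∈ InfOcc ρ :=
    ((mem_infOcc_iff_frequently.1 hsσ).mono fun i hi => hi ▸ (hρ i).1).exists_mem_infOcc
  refine ⟨ρ, ⟨hρ0, fun i => (hρ i).2⟩, q, hq, ?_, fun p hp => ?_⟩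
  · rw [par_eq_snd_of_mem_improvedConv_acc hs hqs]
    exact even_snd_of_mem_improvedConv_acc hs
  · obtain ⟨i₀, -, hi₀⟩ := hsσ 0
    obtain ⟨j, hj, rfl⟩ := hp (i₀ + 1)
    obtain ⟨j, rfl⟩ : ∃ j', j = j' + 1 := ⟨j - 1, by omega⟩
    calc P.par q = (σ i₀).2 := by rw [hi₀, par_eq_snd_of_mem_improvedConv_acc hs hqs]
      _ ≤ (σ (j + 1)).2 := hmono (by omega)
      _ ≤ P.par (ρ (j + 1)) := snd_le_par_of_mem_improvedConv_trans (hσ j) (hρ (j + 1)).1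

theorem lang_subset_improvedConv_lang [Finite Q] (P : NPW A Q) (r : ℕ)
    (hbound : ∀ q, P.par q ≤ 2 * r) : P.Lang ⊆ (improvedConv P r).Lang := by
  rintro w ⟨ρ, hρ, qs, hqs, ⟨k, hk⟩, hmin⟩
  rw [← two_mul] at hk
  obtain ⟨N, hN⟩ := eventually_atTop.1 (eventually_mem_infOcc ρ)
  obtain ⟨i₁, hi₁, rfl⟩ := hqs (N + 1)
  refine ⟨_, improvedConv_isRun_of_isRun hρ (by omega) (by linarith [hbound (ρ i₁)]) hk
    fun i hi => hk ▸ hmin _ (hN i (by omega)), (ClsPar P (2 * k) (ρ i₁), 2 * k),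
    ⟨ρ i₁, k, by linarith [hbound (ρ i₁)], rfl, hk⟩, fun M => ?_⟩
  obtain ⟨i, hi, hρi⟩ := hqs (max M i₁)
  refine ⟨i, le_of_max_le_left hi, ?_⟩
  simp only [if_neg (not_lt.2 (le_of_max_le_right hi)), hρi]

end ImprovedConv

theorem stmt5 {A Q : Type*} [Fintype Q] (P : NPW A Q) (r : ℕ)
    (hbound : ∀ q, P.par q ≤ 2 * r) :
    (improvedConv P r).Lang ⊆ P.Lang ∧ P.Lang = (improvedConv P r).Lang :=
  ⟨improvedConv_lang_subset P r,
    (lang_subset_improvedConv_lang P r hbound).antisymm (improvedConv_lang_subset P r)⟩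
end

section
/- A word w is rejected by an NBW A if and only if the reduced split tree of A on w has a cutoff: a level i such that for every level j ≥ i, every accepting-state node (left child) at level j lies on a finite branch of the tree. -/
/-- One level of the reduced split tree, with parents: for each node `Qi` of the
slice (processed left to right, `seen` collecting states already placed to the
left), record the triple (parent, left (accepting) child, right (nonaccepting)
child), before deletion of empty nodes. -/
def expandTriples {A Q : Type*} (δ : Q → A → Set Q) (F : Set Q) (a : A) :
    List (Set Q) → Set Q → List (Set Q × Set Q × Set Q)
  | [], _ => []
  | Qi :: rest, seen =>
    (Qi, (((⋃ q ∈ Qi, δ q a) ∩ F) \ seen), ((⋃ q ∈ Qi, δ q a) \ F) \ seen) ::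
      expandTriples δ F a rest
        (seen ∪ ((((⋃ q ∈ Qi, δ q a) ∩ F) \ seen)) ∪ (((⋃ q ∈ Qi, δ q a) \ F) \ seen))

/-- The successor slice: children of all nodes, with empty nodes removed. -/
noncomputable def sliceSucc {A Q : Type*} (δ : Q → A → Set Q) (F : Set Q) (a : A)
    (s : List (Set Q)) : List (Set Q) :=
  ((expandTriples δ F a s ∅).flatMap fun tr => [tr.2.1, tr.2.2]).filter
    fun S => @decide S.Nonempty (Classical.propDecidable _)

/-- The slices (levels) of the reduced split tree of `M` on `w`. -/
noncomputable def rstSlice {A Q : Type*} (M : NBW A Q) (w : ℕ → A) : ℕ → List (Set Q)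
  | 0 => [{M.init}]
  | n + 1 => sliceSucc M.trans M.acc (w n) (rstSlice M w n)

/-- `T` is the left (accepting) child of the node `S` of slice `s` on symbol `a`. -/
def LeftChild {A Q : Type*} (δ : Q → A → Set Q) (F : Set Q) (a : A)
    (s : List (Set Q)) (S T : Set Q) : Prop :=
  ∃ tr ∈ expandTriples δ F a s ∅, tr.1 = S ∧ tr.2.1 = T ∧ T.Nonempty

/-- `T` is the right (nonaccepting) child of the node `S` of slice `s` on `a`. -/
def RightChild {A Q : Type*} (δ : Q → A → Set Q) (F : Set Q) (a : A)
    (s : List (Set Q)) (S T : Set Q) : Prop :=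
  ∃ tr ∈ expandTriples δ F a s ∅, tr.1 = S ∧ tr.2.2 = T ∧ T.Nonempty

/-- `T` is a child of `S`. -/
def Child {A Q : Type*} (δ : Q → A → Set Q) (F : Set Q) (a : A)
    (s : List (Set Q)) (S T : Set Q) : Prop :=
  LeftChild δ F a s S T ∨ RightChild δ F a s S T


/-!
Track an accepting run through the tree by the nodes holding its states. Encoding a node by its
path from the root, read as a binary number with left = `0`, these tracking nodes only drift to
the left relative to their parents, so their ancestors stabilise level by level into a branch.
Were that branch to turn right forever from some level `K` on, every late tracking node, lying
below the branch's node of level `K` and not to the left of the branch, would be a right child;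
but the accepting states that the run visits infinitely often lie in left children.

Conversely, two distinct branches separate for good and the nodes of a level are disjoint, so
there are at most `|Q|` branches. If left children lying on infinite branches occur at infinitely
many levels, one branch is therefore left-recurring, and Kőnig's lemma turns it into a run
through its nodes, which meets an accepting state infinitely often.
-/

open Filter

def tripleChild {Q : Type*} (b : Bool) (tr : Set Q × Set Q × Set Q) : Set Q :=
  bif b then tr.2.2 else tr.2.1

theorem mem_pair_iff_exists_tripleChild {Q : Type*} {X : Set Q} {tr : Set Q × Set Q × Set Q} :
    X ∈ [tr.2.1, tr.2.2] ↔ ∃ b, X = tripleChild b tr := by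
  simp [tripleChild, Bool.exists_bool, or_comm]

section ExpandTriples

variable {A Q : Type*} {δ : Q → A → Set Q} {F : Set Q} {a : A} {s : List (Set Q)}
  {seen : Set Q} {tr tr' : Set Q × Set Q × Set Q}

theorem map_fst_expandTriples (s : List (Set Q)) (seen : Set Q) :
    (expandTriples δ F a s seen).map Prod.fst = s := by
  induction s generalizing seen with
  | nil => rfl
  | cons Qi rest ih => simp [expandTriples, ih]

theorem fst_mem_of_mem_expandTriples (h : tr ∈ expandTriples δ F a s seen) : tr.1 ∈ s := by
  rw [← map_fst_expandTriples s seen (δ := δ) (F := F) (a := a)]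
  exact List.mem_map_of_mem h

theorem exists_eq_of_mem_expandTriples (h : tr ∈ expandTriples δ F a s seen) :
    ∃ seen' ⊇ seen, tr = (tr.1, ((⋃ q ∈ tr.1, δ q a) ∩ F) \ seen',
      ((⋃ q ∈ tr.1, δ q a) \ F) \ seen') := by
  induction s generalizing seen with
  | nil => simp [expandTriples] at h
  | cons Qi rest ih =>
    rcases List.mem_cons.1 h with rfl | h
    · exact ⟨seen, subset_rfl, rfl⟩
    · obtain ⟨seen', hsub, htr⟩ := ih h
      exact ⟨seen', (Set.subset_union_left.trans Set.subset_union_left).trans hsub, htr⟩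

theorem tripleChild_subset_biUnion (h : tr ∈ expandTriples δ F a s seen) (b : Bool) :
    tripleChild b tr ⊆ ⋃ q ∈ tr.1, δ q a := by
  obtain ⟨seen', -, htr⟩ := exists_eq_of_mem_expandTriples h
  rw [htr]
  cases b
  exacts [fun x hx => hx.1.1, fun x hx => hx.1.1]

theorem left_subset_of_mem_expandTriples (h : tr ∈ expandTriples δ F a s seen) :
    tr.2.1 ⊆ F := by
  obtain ⟨seen', -, htr⟩ := exists_eq_of_mem_expandTriples h
  rw [htr]
  exact fun x hx => hx.1.2

theorem disjoint_right_of_mem_expandTriples (h : tr ∈ expandTriples δ F a s seen) :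
    Disjoint tr.2.2 F := by
  obtain ⟨seen', -, htr⟩ := exists_eq_of_mem_expandTriples h
  rw [htr]
  exact Set.disjoint_left.2 fun x hx => hx.1.2

theorem disjoint_seen_of_mem_expandTriples (h : tr ∈ expandTriples δ F a s seen) :
    Disjoint (tr.2.1 ∪ tr.2.2) seen := by
  obtain ⟨seen', hsub, htr⟩ := exists_eq_of_mem_expandTriples h
  rw [htr]
  exact Set.disjoint_left.2 fun x hx hxs => hx.elim (·.2 (hsub hxs)) (·.2 (hsub hxs))

theorem disjoint_of_mem_expandTriples (h : tr ∈ expandTriples δ F a s seen)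
    (h' : tr' ∈ expandTriples δ F a s seen) (hne : tr ≠ tr') :
    Disjoint (tr.2.1 ∪ tr.2.2) (tr'.2.1 ∪ tr'.2.2) := by
  induction s generalizing seen with
  | nil => simp [expandTriples] at h
  | cons Qi rest ih =>
    rw [expandTriples] at h h'
    set l := ((⋃ q ∈ Qi, δ q a) ∩ F) \ seen
    set r := ((⋃ q ∈ Qi, δ q a) \ F) \ seen
    have hhead : ∀ {t}, t ∈ expandTriples δ F a rest (seen ∪ l ∪ r) →
        Disjoint (l ∪ r) (t.2.1 ∪ t.2.2) := fun ht =>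
      (disjoint_seen_of_mem_expandTriples ht).symm.mono_left
        (Set.union_subset_union_left _ Set.subset_union_right)
    rcases List.mem_cons.1 h with rfl | h <;> rcases List.mem_cons.1 h' with rfl | h'
    · exact absurd rfl hne
    · exact hhead h'
    · exact (hhead h).symm
    · exact ih h h'

theorem disjoint_tripleChild (h : tr ∈ expandTriples δ F a s seen)
    (h' : tr' ∈ expandTriples δ F a s seen) {b b' : Bool} (hne : (tr, b) ≠ (tr', b')) :
    Disjoint (tripleChild b tr) (tripleChild b' tr') := by
  have hsub : ∀ (c : Bool) (t : Set Q × Set Q × Set Q), tripleChild c t ⊆ t.2.1 ∪ t.2.2 := by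
    rintro (_ | _) t
    exacts [Set.subset_union_left, Set.subset_union_right]
  by_cases htt : tr = tr'
  · subst htt
    have hlr := Set.disjoint_of_subset_left (left_subset_of_mem_expandTriples h)
      (disjoint_right_of_mem_expandTriples h).symm
    cases b <;> cases b' <;> simp_all [tripleChild, hlr.symm]
  · exact (disjoint_of_mem_expandTriples h h' htt).mono (hsub b tr) (hsub b' tr')

theorem eq_of_tripleChild_eq (h : tr ∈ expandTriples δ F a s seen)
    (h' : tr' ∈ expandTriples δ F a s seen) {b b' : Bool} {X : Set Q} (hX : X.Nonempty)
    (hb : X = tripleChild b tr) (hb' : X = tripleChild b' tr') : (tr, b) = (tr', b') := by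
  by_contra hne
  obtain ⟨x, hx⟩ := hX
  exact (disjoint_tripleChild h h' hne).ne_of_mem (hb ▸ hx) (hb' ▸ hx) rfl

theorem exists_mem_expandTriples_of_mem_biUnion (f : Set Q → ℕ)
    (hs : s.Pairwise fun X Y => f X ≤ f Y) {X : Set Q} (hX : X ∈ s) {q : Q}
    (hq : q ∈ ⋃ p ∈ X, δ p a) (hseen : q ∉ seen) :
    ∃ tr ∈ expandTriples δ F a s seen, f tr.1 ≤ f X ∧ (q ∈ tr.2.1 ∨ q ∈ tr.2.2) := by
  induction s generalizing seen with
  | nil => simp at hX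
  | cons Qi rest ih =>
    rw [List.pairwise_cons] at hs
    have hQi : f Qi ≤ f X := (List.mem_cons.1 hX).elim (fun h => h ▸ le_rfl) (hs.1 X)
    by_cases hhead :
        q ∈ ((⋃ p ∈ Qi, δ p a) ∩ F) \ seen ∨ q ∈ ((⋃ p ∈ Qi, δ p a) \ F) \ seen
    · exact ⟨_, List.mem_cons_self, hQi, hhead⟩
    · have hX' : X ∈ rest := by
        refine (List.mem_cons.1 hX).resolve_left fun hXQ => hhead ?_
        subst hXQ
        by_cases hF : q ∈ F
        exacts [Or.inl ⟨⟨hq, hF⟩, hseen⟩, Or.inr ⟨⟨hq, hF⟩, hseen⟩]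
      obtain ⟨tr, htr, hle, hmem⟩ := ih hs.2 hX' (seen := seen ∪ _ ∪ _)
        (by simp only [Set.mem_union, not_or]; exact ⟨⟨hseen, fun h => hhead (Or.inl h)⟩,
          fun h => hhead (Or.inr h)⟩)
      exact ⟨tr, List.mem_cons_of_mem _ htr, hle, hmem⟩

end ExpandTriples

section Slices

variable {A Q : Type*} {δ : Q → A → Set Q} {F : Set Q} {a : A} {s : List (Set Q)}
  {S X Y : Set Q}

theorem mem_sliceSucc_iff :
    X ∈ sliceSucc δ F a s ↔
      (∃ tr ∈ expandTriples δ F a s ∅, ∃ b, X = tripleChild b tr) ∧ X.Nonempty := by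
  simp only [sliceSucc, List.mem_filter, List.mem_flatMap, mem_pair_iff_exists_tripleChild,
    decide_eq_true_eq]

theorem child_iff :
    Child δ F a s S X ↔
      ∃ tr ∈ expandTriples δ F a s ∅, ∃ b,
        tr.1 = S ∧ X = tripleChild b tr ∧ X.Nonempty := by
  simp only [Child, LeftChild, RightChild, Bool.exists_bool, tripleChild, cond_false,
    cond_true, eq_comm (a := X)]
  constructor
  · rintro (⟨tr, htr, h1, h2, h3⟩ | ⟨tr, htr, h1, h2, h3⟩)
    exacts [⟨tr, htr, Or.inl ⟨h1, h2, h3⟩⟩, ⟨tr, htr, Or.inr ⟨h1, h2, h3⟩⟩]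
  · rintro ⟨tr, htr, ⟨h1, h2, h3⟩ | ⟨h1, h2, h3⟩⟩
    exacts [Or.inl ⟨tr, htr, h1, h2, h3⟩, Or.inr ⟨tr, htr, h1, h2, h3⟩]

theorem LeftChild.subset (h : LeftChild δ F a s S X) : X ⊆ F := by
  obtain ⟨tr, htr, -, rfl, -⟩ := h
  exact left_subset_of_mem_expandTriples htr

theorem Child.subset (h : Child δ F a s S X) : X ⊆ ⋃ q ∈ S, δ q a := by
  obtain ⟨tr, htr, b, rfl, rfl, -⟩ := child_iff.1 h
  exact tripleChild_subset_biUnion htr b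

variable {M : NBW A Q} {w : ℕ → A} {n k : ℕ}

theorem nonempty_of_mem_rstSlice (hX : X ∈ rstSlice M w n) : X.Nonempty := by
  cases n with
  | zero => rw [List.mem_singleton.1 hX]; exact Set.singleton_nonempty _
  | succ n => exact (mem_sliceSucc_iff.1 hX).2

theorem eq_of_mem_of_mem_rstSlice (hX : X ∈ rstSlice M w n) (hY : Y ∈ rstSlice M w n) {q : Q}
    (hqX : q ∈ X) (hqY : q ∈ Y) : X = Y := by
  cases n with
  | zero => rw [List.mem_singleton.1 hX, List.mem_singleton.1 hY]
  | succ n =>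
    obtain ⟨⟨tr, htr, b, rfl⟩, -⟩ := mem_sliceSucc_iff.1 hX
    obtain ⟨⟨tr', htr', b', rfl⟩, -⟩ := mem_sliceSucc_iff.1 hY
    by_contra hne
    exact (disjoint_tripleChild htr htr' (by rintro ⟨⟩; exact hne rfl)).ne_of_mem hqX hqY rfl

theorem Child.mem_rstSlice (h : Child M.trans M.acc (w n) (rstSlice M w n) S X) :
    X ∈ rstSlice M w (n + 1) := by
  obtain ⟨tr, htr, b, -, rfl, hne⟩ := child_iff.1 h
  exact mem_sliceSucc_iff.2 ⟨⟨tr, htr, b, rfl⟩, hne⟩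

theorem Child.parent_mem_rstSlice (h : Child M.trans M.acc (w n) (rstSlice M w n) S X) :
    S ∈ rstSlice M w n := by
  obtain ⟨tr, htr, b, rfl, -⟩ := child_iff.1 h
  exact fst_mem_of_mem_expandTriples htr

theorem exists_child_of_mem_rstSlice_succ (hX : X ∈ rstSlice M w (n + 1)) :
    ∃ S, Child M.trans M.acc (w n) (rstSlice M w n) S X := by
  obtain ⟨⟨tr, htr, b, rfl⟩, hne⟩ := mem_sliceSucc_iff.1 hX
  exact ⟨tr.1, child_iff.2 ⟨tr, htr, b, rfl, rfl, hne⟩⟩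

end Slices

section Address

variable {A Q : Type*} {M : NBW A Q} {w : ℕ → A} {n k : ℕ} {S X Y : Set Q}

open Classical in
noncomputable def parentSide (M : NBW A Q) (w : ℕ → A) (k : ℕ) (X : Set Q) : Set Q × Bool :=
  if h : ∃ p : (Set Q × Set Q × Set Q) × Bool,
      p.1 ∈ expandTriples M.trans M.acc (w k) (rstSlice M w k) ∅ ∧ X = tripleChild p.2 p.1
  then (h.choose.1.1, h.choose.2) else (∅, false)

/-- The path from the root to a node of level `k`, read as a `k`-bit binary number with
left = `0`; it orders every level from left to right. -/
noncomputable def addr (M : NBW A Q) (w : ℕ → A) : ℕ → Set Q → ℕ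
  | 0, _ => 0
  | k + 1, X => 2 * addr M w k (parentSide M w k X).1 + (parentSide M w k X).2.toNat

theorem addr_tripleChild {tr : Set Q × Set Q × Set Q} {b : Bool}
    (htr : tr ∈ expandTriples M.trans M.acc (w k) (rstSlice M w k) ∅)
    (hne : (tripleChild b tr).Nonempty) :
    addr M w (k + 1) (tripleChild b tr) = 2 * addr M w k tr.1 + b.toNat := by
  have h : ∃ p : (Set Q × Set Q × Set Q) × Bool,
      p.1 ∈ expandTriples M.trans M.acc (w k) (rstSlice M w k) ∅ ∧
        tripleChild b tr = tripleChild p.2 p.1 := ⟨(tr, b), htr, rfl⟩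
  obtain ⟨h1, h2⟩ := h.choose_spec
  obtain ⟨e1, e2⟩ := Prod.mk.inj (eq_of_tripleChild_eq h1 htr hne h2 rfl)
  rw [addr, parentSide, dif_pos h, e1, e2]

theorem Child.addr_eq (h : Child M.trans M.acc (w k) (rstSlice M w k) S X) :
    ∃ b : Bool, addr M w (k + 1) X = 2 * addr M w k S + b.toNat ∧
      (b = false → LeftChild M.trans M.acc (w k) (rstSlice M w k) S X) := by
  obtain ⟨tr, htr, b, rfl, rfl, hne⟩ := child_iff.1 h
  exact ⟨b, addr_tripleChild htr hne,
    fun hb => ⟨tr, htr, rfl, by simp [hb, tripleChild], hne⟩⟩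

theorem Child.addr_div_two (h : Child M.trans M.acc (w k) (rstSlice M w k) S X) :
    addr M w (k + 1) X / 2 = addr M w k S := by
  obtain ⟨b, hb, -⟩ := h.addr_eq
  have := b.toNat_le
  omega

theorem Child.leftChild_of_even (h : Child M.trans M.acc (w k) (rstSlice M w k) S X)
    (heven : Even (addr M w (k + 1) X)) : LeftChild M.trans M.acc (w k) (rstSlice M w k) S X := by
  obtain ⟨b, hb, hleft⟩ := h.addr_eq
  refine hleft ?_
  cases b
  · rfl
  · simp [hb] at heven

theorem LeftChild.even_addr (h : LeftChild M.trans M.acc (w k) (rstSlice M w k) S X) :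
    Even (addr M w (k + 1) X) := by
  obtain ⟨tr, htr, rfl, rfl, hne⟩ := h
  change Even (addr M w (k + 1) (tripleChild false tr))
  rw [addr_tripleChild (b := false) htr hne]
  simp

theorem pairwise_addr_lt_rstSlice (n : ℕ) :
    (rstSlice M w n).Pairwise fun X Y => addr M w n X < addr M w n Y := by
  induction n with
  | zero => exact List.pairwise_singleton _ _
  | succ n ih =>
    have hET : (expandTriples M.trans M.acc (w n) (rstSlice M w n) ∅).Pairwise
        fun tr tr' => addr M w n tr.1 < addr M w n tr'.1 := by
      have := ih
      rw [← map_fst_expandTriples (δ := M.trans) (F := M.acc) (a := w n) (rstSlice M w n) ∅,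
        List.pairwise_map] at this
      exact this
    have key : ∀ tr ∈ expandTriples M.trans M.acc (w n) (rstSlice M w n) ∅,
        ∀ tr' ∈ expandTriples M.trans M.acc (w n) (rstSlice M w n) ∅, ∀ b b' : Bool,
        (addr M w n tr.1 < addr M w n tr'.1 ∨ b.toNat < b'.toNat ∧ tr = tr') →
        (tripleChild b tr).Nonempty → (tripleChild b' tr').Nonempty →
        addr M w (n + 1) (tripleChild b tr) < addr M w (n + 1) (tripleChild b' tr') := by
      intro tr htr tr' htr' b b' hlt hne hne'
      rw [addr_tripleChild htr hne, addr_tripleChild htr' hne']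
      have := b.toNat_le
      rcases hlt with hlt | ⟨hlt, rfl⟩ <;> omega
    simp only [rstSlice, sliceSucc]
    rw [List.pairwise_filter, List.pairwise_flatMap]
    simp only [decide_eq_true_eq]
    refine ⟨fun tr htr => ?_, (List.Pairwise.and_mem.1 hET).imp ?_⟩
    · simpa [tripleChild] using key tr htr tr htr false true (Or.inr ⟨Nat.zero_lt_one, rfl⟩)
    · rintro tr tr' ⟨htr, htr', hlt⟩ X hX Y hY
      obtain ⟨b, rfl⟩ := mem_pair_iff_exists_tripleChild.1 hX
      obtain ⟨b', rfl⟩ := mem_pair_iff_exists_tripleChild.1 hY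
      exact key tr htr tr' htr' b b' (Or.inl hlt)

theorem eq_of_addr_eq (hX : X ∈ rstSlice M w n) (hY : Y ∈ rstSlice M w n)
    (h : addr M w n X = addr M w n Y) : X = Y := by
  refine List.inj_on_of_nodup_map ?_ hX hY h
  exact List.pairwise_map.2 ((pairwise_addr_lt_rstSlice n).imp ne_of_lt)

theorem Child.parent_eq {S' : Set Q} (h : Child M.trans M.acc (w k) (rstSlice M w k) S X)
    (h' : Child M.trans M.acc (w k) (rstSlice M w k) S' X) : S = S' :=
  eq_of_addr_eq h.parent_mem_rstSlice h'.parent_mem_rstSlice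
    (h.addr_div_two.symm.trans h'.addr_div_two)

theorem exists_ancestor (hY : Y ∈ rstSlice M w n) (hkn : k ≤ n) :
    ∃ X ∈ rstSlice M w k, addr M w k X = addr M w n Y / 2 ^ (n - k) := by
  induction n, hkn using Nat.le_induction generalizing Y with
  | base => exact ⟨Y, hY, by simp⟩
  | succ n hkn ih =>
    obtain ⟨S, hS⟩ := exists_child_of_mem_rstSlice_succ hY
    obtain ⟨X, hX, hXS⟩ := ih hS.parent_mem_rstSlice
    refine ⟨X, hX, ?_⟩
    rw [hXS, ← hS.addr_div_two, Nat.div_div_eq_div_mul, ← pow_succ',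
      Nat.sub_add_comm hkn]

end Address

theorem exists_stable_prefix_of_div_two_le {a : ℕ → ℕ} (ha : ∀ n, a (n + 1) / 2 ≤ a n)
    (heven : ∃ᶠ n in atTop, Even (a n)) :
    ∃ p : ℕ → ℕ, (∀ k, ∀ᶠ n in atTop, a n / 2 ^ (n - k) = p k) ∧
      (∀ k, p (k + 1) / 2 = p k) ∧ ∃ᶠ k in atTop, Even (p (k + 1)) := by
  have hanti : ∀ k, Antitone fun m => a (k + m) / 2 ^ m := fun k =>
    antitone_nat_of_succ_le fun m => by
      rw [pow_succ', ← Nat.div_div_eq_div_mul, ← add_assoc]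
      exact Nat.div_le_div_right (ha _)
  choose N hN using fun k => WellFoundedLT.antitone_chain_condition (hanti k)
  set p := fun k => a (k + N k) / 2 ^ N k
  have hp : ∀ k, ∀ n ≥ k + N k, a n / 2 ^ (n - k) = p k := fun k n hn => by
    simpa [show k + (n - k) = n by omega] using (hN k (n - k) (by omega)).symm
  have hp2 : ∀ k, p (k + 1) / 2 = p k := fun k => by
    set n := k + 1 + N (k + 1) + N k
    rw [← hp (k + 1) n (by omega), ← hp k n (by omega), Nat.div_div_eq_div_mul, ← pow_succ,
      show n - (k + 1) + 1 = n - k by omega]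
  refine ⟨p, fun k => eventually_atTop.2 ⟨_, hp k⟩, hp2, frequently_atTop.2 fun K => ?_⟩
  -- if all bits after `K` were `1`, late addresses `a n` would end in `n - K` ones, hence be odd
  by_contra! hodd
  have hones : ∀ e, p (K + e) + 1 = (p K + 1) * 2 ^ e := fun e => by
    induction e with
    | zero => simp
    | succ e ih =>
      obtain ⟨r, hr⟩ := Nat.not_even_iff_odd.1 (hodd (K + e) (by omega))
      have := hp2 (K + e)
      rw [← add_assoc, pow_succ, ← mul_assoc, ← ih]
      omega
  obtain ⟨n, hn, hnK⟩ := (heven.and_eventually (eventually_ge_atTop (K + N K + 1))).exists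
  have hpn : p n ≤ a n := by simpa using hanti n (Nat.zero_le (N n))
  have hlt : a n < (p K + 1) * 2 ^ (n - K) :=
    (Nat.div_lt_iff_lt_mul (by positivity)).1 (by rw [hp K n (by omega)]; omega)
  have hsucc : a n + 1 = (p K + 1) * 2 ^ (n - K) := by
    have := hones (n - K)
    rw [show K + (n - K) = n by omega] at this
    omega
  have : Even (a n + 1) := hsucc ▸ (Nat.even_pow.2 ⟨even_two, by omega⟩).mul_left _
  exact Nat.not_even_iff_odd.2 hn.add_one this

section Branches

variable {A Q : Type*} {M : NBW A Q} {w : ℕ → A}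

def IsBranch (M : NBW A Q) (w : ℕ → A) (β : ℕ → Set Q) : Prop :=
  ∀ n, Child M.trans M.acc (w n) (rstSlice M w n) (β n) (β (n + 1))

theorem exists_child_mem_of_mem {n : ℕ} {X : Set Q} (hX : X ∈ rstSlice M w n) {q q' : Q}
    (hq : q ∈ X) (hq' : q' ∈ M.trans q (w n)) :
    ∃ S Y, Child M.trans M.acc (w n) (rstSlice M w n) S Y ∧ q' ∈ Y ∧
      addr M w n S ≤ addr M w n X ∧
      (q' ∈ M.acc → LeftChild M.trans M.acc (w n) (rstSlice M w n) S Y) := by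
  obtain ⟨tr, htr, hle, hmem | hmem⟩ :=
    exists_mem_expandTriples_of_mem_biUnion (F := M.acc) (addr M w n)
      ((pairwise_addr_lt_rstSlice n).imp le_of_lt) hX (Set.mem_biUnion hq hq')
      (Set.notMem_empty q')
  · exact ⟨tr.1, tr.2.1, Or.inl ⟨tr, htr, rfl, rfl, q', hmem⟩, hmem, hle,
      fun _ => ⟨tr, htr, rfl, rfl, q', hmem⟩⟩
  · exact ⟨tr.1, tr.2.2, Or.inr ⟨tr, htr, rfl, rfl, q', hmem⟩, hmem, hle,
      fun hacc => absurd hacc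
        (Set.disjoint_left.1 (disjoint_right_of_mem_expandTriples htr) hmem)⟩

/-- The nodes holding the states of a run can only move left, relative to their parents. -/
theorem exists_nodes_of_isRun {ρ : ℕ → Q} (hρ : M.IsRun w ρ) :
    ∃ u : ℕ → Set Q, ∀ n, u n ∈ rstSlice M w n ∧ ρ n ∈ u n ∧
      addr M w (n + 1) (u (n + 1)) / 2 ≤ addr M w n (u n) ∧
      (ρ (n + 1) ∈ M.acc → Even (addr M w (n + 1) (u (n + 1)))) := by
  have hex : ∀ n, ∃ X ∈ rstSlice M w n, ρ n ∈ X := fun n => by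
    induction n with
    | zero => exact ⟨{M.init}, List.mem_singleton_self _, Set.mem_singleton_iff.2 hρ.1⟩
    | succ n ih =>
      obtain ⟨X, hX, hρX⟩ := ih
      obtain ⟨S, Y, hSY, hY, -⟩ := exists_child_mem_of_mem hX hρX (hρ.2 n)
      exact ⟨Y, hSY.mem_rstSlice, hY⟩
  choose u hu hρu using hex
  refine ⟨u, fun n => ⟨hu n, hρu n, ?_⟩⟩
  obtain ⟨S, Y, hSY, hY, hle, hleft⟩ := exists_child_mem_of_mem (hu n) (hρu n) (hρ.2 n)
  obtain rfl := eq_of_mem_of_mem_rstSlice hSY.mem_rstSlice (hu (n + 1)) hY (hρu (n + 1))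
  exact ⟨hSY.addr_div_two ▸ hle, fun hacc => (hleft hacc).even_addr⟩

theorem exists_isBranch_frequently_leftChild (hw : w ∈ M.Lang) :
    ∃ β, IsBranch M w β ∧
      ∃ᶠ k in atTop, LeftChild M.trans M.acc (w k) (rstSlice M w k) (β k) (β (k + 1)) := by
  obtain ⟨ρ, hρ, q, hq, hinf⟩ := hw
  obtain ⟨u, hu⟩ := exists_nodes_of_isRun hρ
  have heven : ∃ᶠ n in atTop, Even (addr M w n (u n)) := frequently_atTop.2 fun N => by
    obtain ⟨i, hi, hρi⟩ := hinf (N + 1)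
    obtain ⟨n, rfl⟩ : ∃ n, i = n + 1 := ⟨i - 1, by omega⟩
    exact ⟨n + 1, by omega, (hu n).2.2.2 (hρi ▸ hq)⟩
  obtain ⟨p, hpu, hp2, hpeven⟩ := exists_stable_prefix_of_div_two_le (fun n => (hu n).2.2.1) heven
  have hv : ∀ k, ∃ X ∈ rstSlice M w k, addr M w k X = p k := fun k => by
    obtain ⟨n, hn, hkn⟩ := ((hpu k).and (eventually_ge_atTop k)).exists
    rw [← hn]
    exact exists_ancestor (hu n).1 hkn
  choose v hv hvp using hv
  have hbranch : IsBranch M w v := fun k => by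
    obtain ⟨S, hS⟩ := exists_child_of_mem_rstSlice_succ (hv (k + 1))
    obtain rfl : S = v k := eq_of_addr_eq hS.parent_mem_rstSlice (hv k)
      (by rw [← hS.addr_div_two, hvp, hvp, hp2])
    exact hS
  exact ⟨v, hbranch, hpeven.mono fun k hk => (hbranch k).leftChild_of_even (hvp (k + 1) ▸ hk)⟩

end Branches

section Konig

variable {Q : Type*} {S : ℕ → Set Q} {R : ℕ → Q → Q → Prop}

def chainHeads (S : ℕ → Set Q) (R : ℕ → Q → Q → Prop) : ℕ → ℕ → Set Q
  | 0, n => S n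
  | d + 1, n => {q ∈ S n | ∃ q' ∈ chainHeads S R d (n + 1), R n q q'}

theorem chainHeads_zero_subset (d n : ℕ) : chainHeads S R d n ⊆ chainHeads S R 0 n := by
  cases d
  exacts [subset_rfl, Set.sep_subset _ _]

theorem antitone_chainHeads (n : ℕ) : Antitone fun d => chainHeads S R d n := by
  refine antitone_nat_of_succ_le fun d => ?_
  induction d generalizing n with
  | zero => exact Set.sep_subset _ _
  | succ d ih =>
    rintro q ⟨hq, q', hq', hR⟩
    exact ⟨hq, q', ih (n + 1) hq', hR⟩

theorem chainHeads_nonempty (hne : ∀ n, (S n).Nonempty)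
    (hpred : ∀ n, ∀ q ∈ S (n + 1), ∃ p ∈ S n, R n p q) (d n : ℕ) :
    (chainHeads S R d n).Nonempty := by
  induction d generalizing n with
  | zero => exact hne n
  | succ d ih =>
    obtain ⟨q', hq'⟩ := ih (n + 1)
    obtain ⟨p, hp, hR⟩ := hpred n q' (chainHeads_zero_subset d (n + 1) hq')
    exact ⟨p, hp, q', hq', hR⟩

/-- Kőnig's lemma for a layered graph on a finite vertex set. -/
theorem exists_seq_of_forall_exists_pred [Finite Q] (hne : ∀ n, (S n).Nonempty)
    (hpred : ∀ n, ∀ q ∈ S (n + 1), ∃ p ∈ S n, R n p q) :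
    ∃ ρ : ℕ → Q, ∀ n, ρ n ∈ S n ∧ R n (ρ n) (ρ (n + 1)) := by
  set G : ℕ → Set Q := fun n => ⋂ d, chainHeads S R d n
  have hstable : ∀ n, ∃ D, G n = chainHeads S R D n := fun n => by
    obtain ⟨D, hD⟩ :=
      WellFoundedLT.antitone_chain_condition (antitone_chainHeads (S := S) (R := R) n)
    refine ⟨D, (Set.iInter_subset _ D).antisymm (Set.subset_iInter fun d => ?_)⟩
    rcases le_total d D with h | h
    exacts [antitone_chainHeads n h, (hD d h).le]
  have hstep : ∀ n, ∀ q ∈ G n, ∃ q' ∈ G (n + 1), R n q q' := fun n q hq => by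
    obtain ⟨D, hD⟩ := hstable (n + 1)
    obtain ⟨-, q', hq', hR⟩ := Set.mem_iInter.1 hq (D + 1)
    exact ⟨q', hD ▸ hq', hR⟩
  obtain ⟨q₀, hq₀⟩ : (G 0).Nonempty := by
    obtain ⟨D, hD⟩ := hstable 0
    exact hD ▸ chainHeads_nonempty hne hpred D 0
  choose next hnext hR using hstep
  let ρ : ∀ n, G n := fun n =>
    Nat.rec ⟨q₀, hq₀⟩ (fun n q => ⟨next n q q.2, hnext n q q.2⟩) n
  have hρ : ∀ n, (ρ (n + 1)).1 = next n (ρ n).1 (ρ n).2 := fun n => rfl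
  exact ⟨fun n => (ρ n).1, fun n =>
    ⟨chainHeads_zero_subset 0 n (Set.mem_iInter.1 (ρ n).2 0),
      by beta_reduce; rw [hρ]; exact hR n _ (ρ n).2⟩⟩

end Konig

section Acceptance

variable {A Q : Type*} {M : NBW A Q} {w : ℕ → A} {β β' : ℕ → Set Q}

theorem IsBranch.mem_lang_of_frequently_leftChild [Finite Q] (hβ : IsBranch M w β)
    (hleft : ∃ᶠ k in atTop,
      LeftChild M.trans M.acc (w k) (rstSlice M w k) (β k) (β (k + 1))) :
    w ∈ M.Lang := by
  obtain ⟨ρ, hρ⟩ := exists_seq_of_forall_exists_pred (S := β)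
    (R := fun n p q => q ∈ M.trans p (w n))
    (fun n => nonempty_of_mem_rstSlice (hβ n).parent_mem_rstSlice)
    (fun n q hq => by simpa using (hβ n).subset hq)
  have hρ0 : ρ 0 = M.init := by
    have h0 : β 0 = {M.init} := List.mem_singleton.1 (hβ 0).parent_mem_rstSlice
    simpa [h0] using (hρ 0).1
  have hacc : ∃ᶠ n in atTop, ρ n ∈ M.acc :=
    (tendsto_add_atTop_nat 1).frequently (hleft.mono fun k hk => hk.subset (hρ (k + 1)).1)
  obtain ⟨q, hq⟩ := frequently_exists.1
    (hacc.mono fun n hn => (⟨ρ n, hn, rfl⟩ : ∃ q, q ∈ M.acc ∧ ρ n = q))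
  exact ⟨ρ, ⟨hρ0, fun n => (hρ n).2⟩, q, hq.exists.elim fun _ h => h.1,
    frequently_atTop.1 (hq.mono fun _ h => h.2)⟩

theorem IsBranch.eventually_ne (hβ : IsBranch M w β) (hβ' : IsBranch M w β')
    (hne : β ≠ β') :
    ∀ᶠ n in atTop, β n ≠ β' n := by
  obtain ⟨n₀, hn₀⟩ := Function.ne_iff.1 hne
  refine eventually_atTop.2 ⟨n₀, fun n hn => ?_⟩
  induction n, hn using Nat.le_induction with
  | base => exact hn₀
  | succ n _ ih => exact fun h => ih ((hβ n).parent_eq (by rw [h]; exact hβ' n))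

theorem finite_setOf_isBranch [Finite Q] : {β | IsBranch M w β}.Finite := by
  by_contra hinf
  obtain ⟨t, hts, hcard⟩ := Set.Infinite.exists_subset_card_eq hinf (Nat.card Q + 1)
  have hsep : ∀ᶠ n in atTop, ∀ β ∈ t, ∀ β' ∈ t, β ≠ β' → β n ≠ β' n := by
    simp only [Finset.eventually_all, eventually_imp_distrib_left]
    exact fun β hβ β' hβ' hne => (hts hβ).eventually_ne (hts hβ') hne
  obtain ⟨n, hn⟩ := hsep.exists
  have hmem : ∀ β ∈ t, β n ∈ rstSlice M w n := fun β hβ => (hts hβ n).parent_mem_rstSlice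
  have : Nonempty Q := ⟨M.init⟩
  choose! q hq using fun β hβ => nonempty_of_mem_rstSlice (hmem β hβ)
  have hinj : Set.InjOn q t := fun β hβ β' hβ' h => by
    by_contra hne
    exact hn β hβ β' hβ' hne
      (eq_of_mem_of_mem_rstSlice (hmem β hβ) (hmem β' hβ') (hq β hβ) (h ▸ hq β' hβ'))
  have := Nat.card_le_card_of_injective (fun β : t => q β) fun β β' h =>
    Subtype.ext (hinj β.2 β'.2 h)
  rw [Nat.card_eq_finsetCard, hcard] at this
  omega

theorem exists_path_to {n : ℕ} {X : Set Q} (hX : X ∈ rstSlice M w n) :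
    ∃ γ : ℕ → Set Q, γ n = X ∧
      ∀ k < n, Child M.trans M.acc (w k) (rstSlice M w k) (γ k) (γ (k + 1)) := by
  induction n generalizing X with
  | zero => exact ⟨fun _ => X, rfl, fun k hk => absurd hk (Nat.not_lt_zero k)⟩
  | succ n ih =>
    obtain ⟨S, hS⟩ := exists_child_of_mem_rstSlice_succ hX
    obtain ⟨γ, hγn, hγ⟩ := ih hS.parent_mem_rstSlice
    refine ⟨fun k => if k ≤ n then γ k else X, by simp, fun k hk => ?_⟩
    rcases Nat.lt_succ_iff_lt_or_eq.1 hk with hk | rfl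
    · simpa [hk.le, Nat.succ_le_of_lt hk] using hγ k hk
    · simpa [hγn] using hS

theorem exists_isBranch_of_child {j : ℕ} {S T : Set Q} {b : ℕ → Set Q}
    (hST : Child M.trans M.acc (w j) (rstSlice M w j) S T) (hb0 : b 0 = T)
    (hb : ∀ m, Child M.trans M.acc (w (j + 1 + m)) (rstSlice M w (j + 1 + m)) (b m) (b (m + 1))) :
    ∃ β, IsBranch M w β ∧ β j = S ∧ β (j + 1) = T := by
  obtain ⟨γ, hγj, hγ⟩ := exists_path_to hST.parent_mem_rstSlice
  refine ⟨fun k => if k ≤ j then γ k else b (k - (j + 1)), fun k => ?_, by simp [hγj],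
    by simp [hb0]⟩
  rcases lt_trichotomy k j with hk | rfl | hk
  · simpa [hk.le, Nat.succ_le_of_lt hk] using hγ k hk
  · simpa [hγj, hb0] using hST
  · obtain ⟨m, rfl⟩ : ∃ m, k = j + 1 + m := ⟨k - (j + 1), by omega⟩
    simpa [show ¬j + 1 + m < j by omega, show ¬j + 1 + m ≤ j by omega,
      show j + 1 + m + 1 - (j + 1) = m + 1 by omega]
      using hb m

theorem exists_isBranch_leftChild_iff {j : ℕ} :
    (∃ β, IsBranch M w β ∧
      LeftChild M.trans M.acc (w j) (rstSlice M w j) (β j) (β (j + 1))) ↔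
    ∃ S T : Set Q, LeftChild M.trans M.acc (w j) (rstSlice M w j) S T ∧
      ∃ b : ℕ → Set Q, b 0 = T ∧
        ∀ m, Child M.trans M.acc (w (j + 1 + m)) (rstSlice M w (j + 1 + m))
          (b m) (b (m + 1)) := by
  constructor
  · rintro ⟨β, hβ, hleft⟩
    exact ⟨β j, β (j + 1), hleft, fun m => β (j + 1 + m), rfl, fun m => hβ (j + 1 + m)⟩
  · rintro ⟨S, T, hST, b, hb0, hb⟩
    obtain ⟨β, hβ, rfl, rfl⟩ := exists_isBranch_of_child (Or.inl hST) hb0 hb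
    exact ⟨β, hβ, hST⟩

theorem mem_lang_iff_frequently_leftChild [Finite Q] :
    w ∈ M.Lang ↔ ∃ᶠ j in atTop, ∃ S T : Set Q,
      LeftChild M.trans M.acc (w j) (rstSlice M w j) S T ∧ ∃ b : ℕ → Set Q, b 0 = T ∧
        ∀ m, Child M.trans M.acc (w (j + 1 + m)) (rstSlice M w (j + 1 + m)) (b m) (b (m + 1)) :=
  calc w ∈ M.Lang ↔ ∃ β ∈ {β | IsBranch M w β},
        ∃ᶠ j in atTop, LeftChild M.trans M.acc (w j) (rstSlice M w j) (β j) (β (j + 1)) :=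
        ⟨exists_isBranch_frequently_leftChild,
          fun ⟨_, hβ, h⟩ => hβ.mem_lang_of_frequently_leftChild h⟩
    _ ↔ ∃ᶠ j in atTop, ∃ β ∈ {β | IsBranch M w β},
        LeftChild M.trans M.acc (w j) (rstSlice M w j) (β j) (β (j + 1)) :=
        finite_setOf_isBranch.frequently_exists.symm
    _ ↔ _ := frequently_congr (.of_forall fun _ => exists_isBranch_leftChild_iff)

end Acceptance

/-- A word is rejected by an NBW iff its reduced split tree has a cutoff: a
level `i` such that from every level `j ≥ i` on, every left (accepting) child
lies on a finite branch, i.e. admits no infinite branch extending it. -/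
theorem stmt9 {A Q : Type*} [Fintype Q] (M : NBW A Q) (w : ℕ → A) :
    w ∉ M.Lang ↔
      ∃ i : ℕ, ∀ j ≥ i, ∀ S T : Set Q,
        LeftChild M.trans M.acc (w j) (rstSlice M w j) S T →
        ¬ ∃ b : ℕ → Set Q, b 0 = T ∧
            ∀ m, Child M.trans M.acc (w (j + 1 + m)) (rstSlice M w (j + 1 + m))
              (b m) (b (m + 1)) := by
  rw [mem_lang_iff_frequently_leftChild, not_frequently, eventually_atTop]
  simp only [not_exists, not_and]
end
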